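/- Let n ≥ 1, let Q be an n × n real matrix with nonnegative entries, let δ ∈ (0, 1] and 0 < m ≤ n be real numbers, and suppose that ‖Q‖ ≤ 1 − δm/n and that for every natural number t and all indices s, x one has (Qᵗ)_{s,x} ≤ 1/n + (1−δ)ᵗ. Then for all natural numbers u, t, r and every index s: (Q^{u+t+r})_{s,s} ≤ ( 1/n + (1−δ)^u ) ( (1 − δm/n)^r + n(1−δ)^t ). -/

import Mathlib

/-!
Split `Q^{u+t+r} = Q^u · Q^r · Q^t`. Row `s` of `Q^u` is entrywise at most `1/n + (1-δ)^u`, so the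
diagonal entry is at most that bound times the sum of the vector `Q^r w`, where `w` is column `s`
of `Q^t`. By Cauchy–Schwarz this sum is at most `√n ‖Q^r w‖₂ ≤ √n (1 - δm/n)^r ‖w‖₂`, and the
entrywise bound on `Q^t` gives `‖w‖₂ ≤ √n (1/n + (1-δ)^t)`.
-/

open Finset Matrix

section SumOfSquares

variable {ι : Type*} [Fintype ι]

lemma Real.sum_le_sqrt_card_mul_sqrt_sum_sq (v : ι → ℝ) :
    ∑ i, v i ≤ √(Fintype.card ι) * √(∑ i, v i ^ 2) := by
  simpa using Real.sum_mul_le_sqrt_mul_sqrt univ (fun _ ↦ 1) v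

lemma Real.sqrt_sum_sq_le_sqrt_card_mul {w : ι → ℝ} {β : ℝ} (hβ : 0 ≤ β)
    (hw : ∀ i, |w i| ≤ β) : √(∑ i, w i ^ 2) ≤ √(Fintype.card ι) * β := by
  have hsq : ∑ i, w i ^ 2 ≤ Fintype.card ι * β ^ 2 := by
    simpa using sum_le_card_nsmul univ (fun i ↦ w i ^ 2) (β ^ 2)
      fun i _ ↦ sq_le_sq' (abs_le.mp (hw i)).1 (abs_le.mp (hw i)).2
  calc √(∑ i, w i ^ 2) ≤ √(Fintype.card ι * β ^ 2) := Real.sqrt_le_sqrt hsq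
    _ = √(Fintype.card ι) * β := by rw [Real.sqrt_mul (Nat.cast_nonneg _), Real.sqrt_sq hβ]

end SumOfSquares

namespace Matrix

variable {ι : Type*} [Fintype ι]

lemma mul_apply_le_mul_sum {R : Type*} [Semiring R] [PartialOrder R] [IsOrderedRing R]
    {A B : Matrix ι ι R} {i k : ι} {a : R} (hA : ∀ j, A i j ≤ a) (hB : ∀ j, 0 ≤ B j k) :
    (A * B) i k ≤ a * ∑ j, B j k := by
  rw [mul_apply, mul_sum]
  exact sum_le_sum fun j _ ↦ mul_le_mul_of_nonneg_right (hA j) (hB j)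

variable [DecidableEq ι] {Q : Matrix ι ι ℝ} {c : ℝ}

lemma sqrt_sum_sq_pow_mulVec_le (hc : 0 ≤ c)
    (hQ : ∀ x : ι → ℝ, √(∑ i, (Q *ᵥ x) i ^ 2) ≤ c * √(∑ i, x i ^ 2)) (r : ℕ) (x : ι → ℝ) :
    √(∑ i, (Q ^ r *ᵥ x) i ^ 2) ≤ c ^ r * √(∑ i, x i ^ 2) := by
  induction r generalizing x with
  | zero => simp
  | succ r ih =>
    calc √(∑ i, (Q ^ (r + 1) *ᵥ x) i ^ 2) = √(∑ i, (Q ^ r *ᵥ Q *ᵥ x) i ^ 2) := by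
          rw [pow_succ, mulVec_mulVec]
      _ ≤ c ^ r * (c * √(∑ i, x i ^ 2)) := (ih _).trans (by gcongr; exact hQ x)
      _ = c ^ (r + 1) * √(∑ i, x i ^ 2) := by ring

lemma sum_pow_mulVec_le (hc : 0 ≤ c)
    (hQ : ∀ x : ι → ℝ, √(∑ i, (Q *ᵥ x) i ^ 2) ≤ c * √(∑ i, x i ^ 2))
    {w : ι → ℝ} {β : ℝ} (hβ : 0 ≤ β) (hw : ∀ i, |w i| ≤ β) (r : ℕ) :
    ∑ i, (Q ^ r *ᵥ w) i ≤ Fintype.card ι * (c ^ r * β) := by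
  have hcard := Real.mul_self_sqrt (Nat.cast_nonneg (α := ℝ) (Fintype.card ι))
  calc ∑ i, (Q ^ r *ᵥ w) i ≤ √(Fintype.card ι) * √(∑ i, (Q ^ r *ᵥ w) i ^ 2) :=
        Real.sum_le_sqrt_card_mul_sqrt_sum_sq _
    _ ≤ √(Fintype.card ι) * (c ^ r * (√(Fintype.card ι) * β)) := by
        gcongr
        exact (sqrt_sum_sq_pow_mulVec_le hc hQ r w).trans
          (by gcongr; exact Real.sqrt_sum_sq_le_sqrt_card_mul hβ hw)
    _ = Fintype.card ι * (c ^ r * β) := by linear_combination c ^ r * β * hcard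

end Matrix

theorem stmt17 (n : ℕ) (hn : 1 ≤ n) (Q : Matrix (Fin n) (Fin n) ℝ)
    (hQ0 : ∀ i j, 0 ≤ Q i j)
    (δ m : ℝ) (hδ0 : 0 < δ) (hδ1 : δ ≤ 1) (hm0 : 0 < m) (hmn : m ≤ n)
    (hnorm : ∀ x : Fin n → ℝ,
      Real.sqrt (∑ i, (Q.mulVec x) i ^ 2) ≤
        (1 - δ * m / n) * Real.sqrt (∑ i, x i ^ 2))
    (hent : ∀ (t : ℕ) (s x : Fin n), (Q ^ t) s x ≤ 1 / n + (1 - δ) ^ t) :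
    ∀ (u t r : ℕ) (s : Fin n),
      (Q ^ (u + t + r)) s s ≤
        (1 / n + (1 - δ) ^ u) * ((1 - δ * m / n) ^ r + n * (1 - δ) ^ t) := by
  intro u t r s
  have hn0 : (0 : ℝ) < n := by exact_mod_cast hn
  have hδ : 0 ≤ 1 - δ := sub_nonneg.mpr hδ1
  have hc0 : 0 ≤ 1 - δ * m / n := by
    rw [sub_nonneg, div_le_one hn0]; nlinarith
  set c := 1 - δ * m / n
  have hcr : c ^ r ≤ 1 := pow_le_one₀ hc0 (sub_le_self _ (by positivity))
  have hpow := Matrix.pow_apply_nonneg hQ0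
  have hcol : ∑ y, (Q ^ r *ᵥ fun z ↦ (Q ^ t) z s) y ≤ n * (c ^ r * (1 / n + (1 - δ) ^ t)) := by
    simpa using Matrix.sum_pow_mulVec_le hc0 hnorm (by positivity)
      (fun z ↦ (abs_of_nonneg (hpow t z s)).trans_le (hent t z s)) r
  calc (Q ^ (u + t + r)) s s = (Q ^ u * (Q ^ r * Q ^ t)) s s := by
        rw [← pow_add, ← pow_add, add_assoc, add_comm t]
    _ ≤ (1 / n + (1 - δ) ^ u) * ∑ y, (Q ^ r *ᵥ fun z ↦ (Q ^ t) z s) y :=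
        Matrix.mul_apply_le_mul_sum (hent u s) fun y ↦ by rw [← pow_add]; exact hpow _ y s
    _ ≤ (1 / n + (1 - δ) ^ u) * (c ^ r + c ^ r * (n * (1 - δ) ^ t)) := by
        gcongr
        exact hcol.trans_eq <| by
          linear_combination c ^ r * (mul_one_div_cancel hn0.ne' : (n : ℝ) * (1 / n) = 1)
    _ ≤ (1 / n + (1 - δ) ^ u) * (c ^ r + n * (1 - δ) ^ t) := by
        gcongr _ * (_ + ?_)
        exact mul_le_of_le_one_left (by positivity) hcr
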